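/- (Ertel-type entropy circulation invariant in ℝ³.) Let u : ℝ × ℝ³ → ℝ³ and ρ, S, g, h : ℝ × ℝ³ → ℝ be smooth with ρ > 0, satisfying ∂ₜu + (u·∇)u = ∇g + h∇S, ∂ₜρ + div(ρu) = 0, and ∂ₜS + ⟨u, ∇S⟩ = 0 everywhere. Then the potential vorticity θ = ⟨∇S, curl u⟩ / ρ is materially constant: ∂ₜθ + ⟨u, ∇θ⟩ = 0 everywhere. -/

import Mathlib

open scoped RealInnerProductSpace

/-- The curl of a vector field on `ℝ³`. -/
noncomputable def curl3 (w : EuclideanSpace ℝ (Fin 3) → EuclideanSpace ℝ (Fin 3))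
    (x : EuclideanSpace ℝ (Fin 3)) : EuclideanSpace ℝ (Fin 3) :=
  (WithLp.equiv 2 (Fin 3 → ℝ)).symm
    ![fderiv ℝ w x (EuclideanSpace.single 1 1) 2 - fderiv ℝ w x (EuclideanSpace.single 2 1) 1,
      fderiv ℝ w x (EuclideanSpace.single 2 1) 0 - fderiv ℝ w x (EuclideanSpace.single 0 1) 2,
      fderiv ℝ w x (EuclideanSpace.single 0 1) 1 - fderiv ℝ w x (EuclideanSpace.single 1 1) 0]

/-- Ertel-type potential vorticity `θ = ⟨∇S, curl u⟩ / ρ`. -/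
noncomputable def ertelPV
    (u : ℝ × EuclideanSpace ℝ (Fin 3) → EuclideanSpace ℝ (Fin 3))
    (ρ S : ℝ × EuclideanSpace ℝ (Fin 3) → ℝ)
    (t : ℝ) (x : EuclideanSpace ℝ (Fin 3)) : ℝ :=
  ⟪gradient (fun y => S (t, y)) x, curl3 (fun y => u (t, y)) x⟫ / ρ (t, x)

namespace Ertel

abbrev E3 := EuclideanSpace ℝ (Fin 3)
abbrev M3 := ℝ × EuclideanSpace ℝ (Fin 3)

noncomputable def Dd (v : M3) (f : M3 → ℝ) : M3 → ℝ := fun z => fderiv ℝ f z v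
noncomputable def ex (i : Fin 3) : M3 := ((0 : ℝ), EuclideanSpace.single i 1)
noncomputable def et : M3 := ((1 : ℝ), (0 : E3))
noncomputable def Uc (u : M3 → E3) (i : Fin 3) : M3 → ℝ := fun z => u z i

noncomputable def Af (u : M3 → E3) (S : M3 → ℝ) : M3 → ℝ := fun z =>
  Dd (ex 0) S z * (Dd (ex 1) (Uc u 2) z - Dd (ex 2) (Uc u 1) z)
  + Dd (ex 1) S z * (Dd (ex 2) (Uc u 0) z - Dd (ex 0) (Uc u 2) z)
  + Dd (ex 2) S z * (Dd (ex 0) (Uc u 1) z - Dd (ex 1) (Uc u 0) z)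

lemma Dd_contDiff {f : M3 → ℝ} (hf : ContDiff ℝ (⊤ : ℕ∞) f) (v : M3) :
    ContDiff ℝ (⊤ : ℕ∞) (Dd v f) :=
  ((ContinuousLinearMap.apply ℝ ℝ v).contDiff).comp (hf.fderiv_right (by simp))

lemma Dd_diff {f : M3 → ℝ} (hf : ContDiff ℝ (⊤ : ℕ∞) f) (v : M3) (z : M3) :
    DifferentiableAt ℝ (Dd v f) z :=
  ((Dd_contDiff hf v).differentiable (by simp)).differentiableAt

lemma Dd_comm {f : M3 → ℝ} (hf : ContDiff ℝ (⊤ : ℕ∞) f) (v w z : M3) :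
    Dd w (Dd v f) z = Dd v (Dd w f) z := by
  have hfd : DifferentiableAt ℝ (fderiv ℝ f) z :=
    ((hf.fderiv_right (m := 1) (WithTop.coe_le_coe.mpr le_top)).differentiable (by simp)).differentiableAt
  have expand : ∀ a b : M3, Dd b (Dd a f) z = fderiv ℝ (fderiv ℝ f) z b a := by
    intro a b
    show fderiv ℝ (fun y => (fderiv ℝ f y) a) z b = _
    rw [fderiv_clm_apply hfd (differentiableAt_const a)]
    simp
  rw [expand, expand]
  exact (hf.contDiffAt.isSymmSndFDerivAt (by rw [minSmoothness_of_isRCLikeNormedField]; exact WithTop.coe_le_coe.mpr le_top)) w v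

variable {F' : Type*} [NormedAddCommGroup F'] [NormedSpace ℝ F']

lemma deriv_slice (f : M3 → F') {t : ℝ} {x : E3} (hf : DifferentiableAt ℝ f (t, x)) :
    deriv (fun τ => f (τ, x)) t = fderiv ℝ f (t, x) (1, 0) := by
  have h1 : HasDerivAt (fun τ : ℝ => ((τ, x) : M3)) ((1 : ℝ), (0 : E3)) t :=
    (hasDerivAt_id t).prodMk (hasDerivAt_const t x)
  exact (hf.hasFDerivAt.comp_hasDerivAt t h1).deriv

lemma fderiv_slice (f : M3 → F') {t : ℝ} {x : E3} (hf : DifferentiableAt ℝ f (t, x)) (w : E3) :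
    fderiv ℝ (fun y => f (t, y)) x w = fderiv ℝ f (t, x) (0, w) := by
  have h1 : HasFDerivAt (fun y : E3 => ((t, y) : M3)) (ContinuousLinearMap.inr ℝ ℝ E3) x :=
    hasFDerivAt_prodMk_right t x
  have h2 : HasFDerivAt (fun y => f (t, y))
      ((fderiv ℝ f (t, x)).comp (ContinuousLinearMap.inr ℝ ℝ E3)) x := hf.hasFDerivAt.comp x h1
  rw [h2.fderiv]
  simp

lemma inner_grad (φ : E3 → ℝ) (x : E3) (w : E3) :
    ⟪gradient φ x, w⟫ = fderiv ℝ φ x w := by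
  rw [gradient]
  exact InnerProductSpace.toDual_symm_apply

lemma grad_comp (φ : E3 → ℝ) (x : E3) (i : Fin 3) :
    gradient φ x i = fderiv ℝ φ x (EuclideanSpace.single i 1) := by
  rw [← inner_grad φ x (EuclideanSpace.single i 1), real_inner_comm,
    EuclideanSpace.inner_single_left]
  simp

lemma fderiv_pi_comp {E : Type*} [NormedAddCommGroup E] [NormedSpace ℝ E]
    (f : E → E3) {z : E} (hf : DifferentiableAt ℝ f z) (v : E) (i : Fin 3) :
    fderiv ℝ (fun z => f z i) z v = fderiv ℝ f z v i := by
  have h : fderiv ℝ (fun z => EuclideanSpace.proj (𝕜 := ℝ) i (f z)) z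
      = (EuclideanSpace.proj (𝕜 := ℝ) i).comp (fderiv ℝ f z) :=
    ((EuclideanSpace.proj (𝕜 := ℝ) i).hasFDerivAt.comp z hf.hasFDerivAt).fderiv
  have h2 : (fun z => f z i) = fun z => EuclideanSpace.proj (𝕜 := ℝ) i (f z) := rfl
  rw [h2, h]
  rfl

lemma decomp (v : E3) :
    (((0 : ℝ), v) : M3) = ∑ i : Fin 3, v i • ex i := by
  rw [Prod.ext_iff]
  constructor
  · simp only [Prod.fst_sum, ex, Prod.smul_mk]
    simp
  · simp only [Prod.snd_sum, ex, Prod.smul_mk]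
    ext j
    simp [EuclideanSpace.single_apply, Finset.sum_apply, Fin.sum_univ_three]
    fin_cases j <;> simp

lemma fderiv_dir_decomp (f : M3 → ℝ) (z : M3) (v : E3) :
    fderiv ℝ f z ((0 : ℝ), v) = ∑ i : Fin 3, v i * Dd (ex i) f z := by
  rw [decomp, map_sum]
  simp [Dd]

lemma Uc_contDiff {u : M3 → E3} (hu : ContDiff ℝ (⊤ : ℕ∞) u) (i : Fin 3) :
    ContDiff ℝ (⊤ : ℕ∞) (Uc u i) :=
  (EuclideanSpace.proj (𝕜 := ℝ) i).contDiff.comp hu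

section PointRules
variable {f g A ρ : M3 → ℝ} {z v : M3}

lemma Dd_mul (hf : DifferentiableAt ℝ f z) (hg : DifferentiableAt ℝ g z) (v : M3) :
    Dd v (fun z => f z * g z) z = Dd v f z * g z + f z * Dd v g z := by
  simp only [Dd, fderiv_fun_mul hf hg, ContinuousLinearMap.add_apply,
    ContinuousLinearMap.smul_apply, smul_eq_mul]
  ring

lemma Dd_add (hf : DifferentiableAt ℝ f z) (hg : DifferentiableAt ℝ g z) (v : M3) :
    Dd v (fun z => f z + g z) z = Dd v f z + Dd v g z := by
  simp only [Dd, fderiv_fun_add hf hg, ContinuousLinearMap.add_apply]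

lemma Dd_sub (hf : DifferentiableAt ℝ f z) (hg : DifferentiableAt ℝ g z) (v : M3) :
    Dd v (fun z => f z - g z) z = Dd v f z - Dd v g z := by
  simp only [Dd, fderiv_fun_sub hf hg, ContinuousLinearMap.sub_apply]

lemma Dd_neg (v : M3) :
    Dd v (fun z => -f z) z = -Dd v f z := by
  simp only [Dd, fderiv_fun_neg, ContinuousLinearMap.neg_apply]

lemma Dd_div (hA : DifferentiableAt ℝ A z) (hρ : DifferentiableAt ℝ ρ z)
    (hρ0 : ∀ z, ρ z ≠ 0) (v : M3) :
    Dd v (fun z => A z / ρ z) z = (Dd v A z * ρ z - A z * Dd v ρ z) / ρ z ^ 2 := by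
  have hq : DifferentiableAt ℝ (fun z => A z / ρ z) z := by
    simp only [div_eq_mul_inv]
    exact hA.mul (hρ.inv (hρ0 z))
  have hAe : (fun z => (A z / ρ z) * ρ z) = A := funext fun z => div_mul_cancel₀ _ (hρ0 z)
  have key : Dd v A z
      = Dd v (fun z => A z / ρ z) z * ρ z + (A z / ρ z) * Dd v ρ z := by
    conv_lhs => rw [← hAe]
    exact Dd_mul hq hρ v
  rw [eq_div_iff (pow_ne_zero 2 (hρ0 z)), key]
  field_simp [hρ0 z]
  ring

lemma Dd_cyc (f1 f2 f3 g1 g2 g3 g4 g5 g6 : M3 → ℝ)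
    (h1 : DifferentiableAt ℝ f1 z) (h2 : DifferentiableAt ℝ f2 z) (h3 : DifferentiableAt ℝ f3 z)
    (k1 : DifferentiableAt ℝ g1 z) (k2 : DifferentiableAt ℝ g2 z) (k3 : DifferentiableAt ℝ g3 z)
    (k4 : DifferentiableAt ℝ g4 z) (k5 : DifferentiableAt ℝ g5 z) (k6 : DifferentiableAt ℝ g6 z)
    (v : M3) :
    Dd v (fun z => f1 z * (g1 z - g2 z) + f2 z * (g3 z - g4 z) + f3 z * (g5 z - g6 z)) z
      = Dd v f1 z * (g1 z - g2 z) + f1 z * (Dd v g1 z - Dd v g2 z)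
        + (Dd v f2 z * (g3 z - g4 z) + f2 z * (Dd v g3 z - Dd v g4 z))
        + (Dd v f3 z * (g5 z - g6 z) + f3 z * (Dd v g5 z - Dd v g6 z)) := by
  rw [Dd_add ((h1.fun_mul (k1.fun_sub k2)).fun_add (h2.fun_mul (k3.fun_sub k4))) (h3.fun_mul (k5.fun_sub k6)),
    Dd_add (h1.fun_mul (k1.fun_sub k2)) (h2.fun_mul (k3.fun_sub k4)),
    Dd_mul h1 (k1.fun_sub k2), Dd_mul h2 (k3.fun_sub k4), Dd_mul h3 (k5.fun_sub k6),
    Dd_sub k1 k2, Dd_sub k3 k4, Dd_sub k5 k6]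

lemma Dd_negsum3 (p1 p2 p3 q1 q2 q3 : M3 → ℝ)
    (h1 : DifferentiableAt ℝ p1 z) (h2 : DifferentiableAt ℝ p2 z) (h3 : DifferentiableAt ℝ p3 z)
    (k1 : DifferentiableAt ℝ q1 z) (k2 : DifferentiableAt ℝ q2 z) (k3 : DifferentiableAt ℝ q3 z)
    (v : M3) :
    Dd v (fun z => -(p1 z * q1 z + p2 z * q2 z + p3 z * q3 z)) z
      = -((Dd v p1 z * q1 z + p1 z * Dd v q1 z) + (Dd v p2 z * q2 z + p2 z * Dd v q2 z)
          + (Dd v p3 z * q3 z + p3 z * Dd v q3 z)) := by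
  rw [Dd_neg, Dd_add ((h1.fun_mul k1).fun_add (h2.fun_mul k2)) (h3.fun_mul k3), Dd_add (h1.fun_mul k1) (h2.fun_mul k2),
    Dd_mul h1 k1, Dd_mul h2 k2, Dd_mul h3 k3]

lemma Dd_eulshape (G p q a1 c1 a2 c2 a3 c3 : M3 → ℝ)
    (hG : DifferentiableAt ℝ G z) (hp : DifferentiableAt ℝ p z) (hq : DifferentiableAt ℝ q z)
    (h1 : DifferentiableAt ℝ a1 z) (k1 : DifferentiableAt ℝ c1 z)
    (h2 : DifferentiableAt ℝ a2 z) (k2 : DifferentiableAt ℝ c2 z)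
    (h3 : DifferentiableAt ℝ a3 z) (k3 : DifferentiableAt ℝ c3 z) (v : M3) :
    Dd v (fun z => G z + p z * q z - (a1 z * c1 z + a2 z * c2 z + a3 z * c3 z)) z
      = Dd v G z + (Dd v p z * q z + p z * Dd v q z)
        - ((Dd v a1 z * c1 z + a1 z * Dd v c1 z) + (Dd v a2 z * c2 z + a2 z * Dd v c2 z)
          + (Dd v a3 z * c3 z + a3 z * Dd v c3 z)) := by
  rw [Dd_sub (hG.fun_add (hp.fun_mul hq)) (((h1.fun_mul k1).fun_add (h2.fun_mul k2)).fun_add (h3.fun_mul k3)),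
    Dd_add hG (hp.fun_mul hq), Dd_mul hp hq,
    Dd_add ((h1.fun_mul k1).fun_add (h2.fun_mul k2)) (h3.fun_mul k3), Dd_add (h1.fun_mul k1) (h2.fun_mul k2),
    Dd_mul h1 k1, Dd_mul h2 k2, Dd_mul h3 k3]

end PointRules

lemma ertelPV_eq {u : M3 → E3} {ρ S : M3 → ℝ} (hu : ContDiff ℝ (⊤ : ℕ∞) u) (hS : ContDiff ℝ (⊤ : ℕ∞) S)
    (t : ℝ) (x : E3) :
    ertelPV u ρ S t x = Af u S (t, x) / ρ (t, x) := by
  have hud : DifferentiableAt ℝ u (t, x) := (hu.differentiable (by simp)).differentiableAt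
  have hSd : DifferentiableAt ℝ S (t, x) := (hS.differentiable (by simp)).differentiableAt
  have hcurl : ∀ (j k : Fin 3),
      fderiv ℝ (fun y => u (t, y)) x (EuclideanSpace.single j 1) k = Dd (ex j) (Uc u k) (t, x) := by
    intro j k
    rw [fderiv_slice u hud]
    exact (fderiv_pi_comp u hud (ex j) k).symm
  have hgrad : ∀ i : Fin 3,
      gradient (fun y => S (t, y)) x i = Dd (ex i) S (t, x) := by
    intro i
    rw [grad_comp, fderiv_slice S hSd]
    rfl
  rw [ertelPV]
  congr 1
  rw [PiLp.inner_apply, Fin.sum_univ_three]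
  simp only [RCLike.inner_apply, conj_trivial]
  rw [hgrad 0, hgrad 1, hgrad 2]
  rw [Af]
  simp only [curl3, WithLp.equiv_symm_apply, PiLp.toLp_apply]
  simp only [Matrix.cons_val_zero, Matrix.cons_val_one, Matrix.head_cons,
    Matrix.cons_val_two, Matrix.tail_cons]
  rw [hcurl 1 2, hcurl 2 1, hcurl 2 0, hcurl 0 2, hcurl 0 1, hcurl 1 0]
  ring

end Ertel
open Ertel

theorem ertel_potential_vorticity_invariant
    (u : ℝ × EuclideanSpace ℝ (Fin 3) → EuclideanSpace ℝ (Fin 3))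
    (ρ S g h : ℝ × EuclideanSpace ℝ (Fin 3) → ℝ)
    (hu : ContDiff ℝ (⊤ : ℕ∞) u) (hρ : ContDiff ℝ (⊤ : ℕ∞) ρ) (hS : ContDiff ℝ (⊤ : ℕ∞) S)
    (hg : ContDiff ℝ (⊤ : ℕ∞) g) (hh : ContDiff ℝ (⊤ : ℕ∞) h)
    (hρpos : ∀ (t : ℝ) (x : EuclideanSpace ℝ (Fin 3)), 0 < ρ (t, x))
    (euler : ∀ (t : ℝ) (x : EuclideanSpace ℝ (Fin 3)),
      deriv (fun τ => u (τ, x)) t + fderiv ℝ (fun y => u (t, y)) x (u (t, x))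
        = gradient (fun y => g (t, y)) x + h (t, x) • gradient (fun y => S (t, y)) x)
    (continuity : ∀ (t : ℝ) (x : EuclideanSpace ℝ (Fin 3)),
      deriv (fun τ => ρ (τ, x)) t
        + ∑ i : Fin 3,
            fderiv ℝ (fun y => ρ (t, y) • u (t, y)) x (EuclideanSpace.single i 1) i = 0)
    (entropy : ∀ (t : ℝ) (x : EuclideanSpace ℝ (Fin 3)),
      deriv (fun τ => S (τ, x)) t + ⟪u (t, x), gradient (fun y => S (t, y)) x⟫ = 0) :
    ∀ (t : ℝ) (x : EuclideanSpace ℝ (Fin 3)),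
      deriv (fun τ => ertelPV u ρ S τ x) t
        + ⟪u (t, x), gradient (fun y => ertelPV u ρ S t y) x⟫ = 0 := by
  intro t x
  have du : ∀ w : M3, DifferentiableAt ℝ u w := fun w => (hu.differentiable (by simp)).differentiableAt
  have dS : ∀ w : M3, DifferentiableAt ℝ S w := fun w => (hS.differentiable (by simp)).differentiableAt
  have dρ : ∀ w : M3, DifferentiableAt ℝ ρ w := fun w => (hρ.differentiable (by simp)).differentiableAt
  have dg : ∀ w : M3, DifferentiableAt ℝ g w := fun w => (hg.differentiable (by simp)).differentiableAt
  have dh : ∀ w : M3, DifferentiableAt ℝ h w := fun w => (hh.differentiable (by simp)).differentiableAt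
  have hUc : ∀ i : Fin 3, ContDiff ℝ (⊤ : ℕ∞) (Uc u i) := fun i => Uc_contDiff hu i
  have dUc : ∀ (i : Fin 3) (w : M3), DifferentiableAt ℝ (Uc u i) w :=
    fun i w => (((hUc i).differentiable (by simp))).differentiableAt
  have hρ0 : ∀ w : M3, ρ w ≠ 0 := fun w => by
    have := hρpos w.1 w.2
    simp only [Prod.mk.eta] at this
    exact ne_of_gt this
  have hAfc : ContDiff ℝ (⊤ : ℕ∞) (Af u S) :=
    (((Dd_contDiff hS (ex 0)).mul ((Dd_contDiff (hUc 2) (ex 1)).sub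
        (Dd_contDiff (hUc 1) (ex 2)))).add
      (((Dd_contDiff hS (ex 1)).mul ((Dd_contDiff (hUc 0) (ex 2)).sub
        (Dd_contDiff (hUc 2) (ex 0)))))).add
      ((Dd_contDiff hS (ex 2)).mul ((Dd_contDiff (hUc 1) (ex 0)).sub
        (Dd_contDiff (hUc 0) (ex 1))))
  have dAf : ∀ w : M3, DifferentiableAt ℝ (Af u S) w :=
    fun w => (hAfc.differentiable (by simp)).differentiableAt
  set Θ : M3 → ℝ := fun w => Af u S w / ρ w with hΘdef
  have dΘ : ∀ w : M3, DifferentiableAt ℝ Θ w := fun w => by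
    rw [hΘdef]
    simp only [div_eq_mul_inv]
    exact (dAf w).mul ((dρ w).inv (hρ0 w))
  -- entropy equation, pointwise in canonical form
  have Hent : ∀ w : M3, Dd et S w
      = -(Uc u 0 w * Dd (ex 0) S w + Uc u 1 w * Dd (ex 1) S w + Uc u 2 w * Dd (ex 2) S w) := by
    rintro ⟨τ, y⟩
    have H := entropy τ y
    rw [deriv_slice S (dS (τ, y)), real_inner_comm, inner_grad,
      fderiv_slice S (dS (τ, y)) (u (τ, y)),
      fderiv_dir_decomp S (τ, y) (u (τ, y)), Fin.sum_univ_three] at H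
    have H2 : Dd et S (τ, y) + (Uc u 0 (τ, y) * Dd (ex 0) S (τ, y)
        + Uc u 1 (τ, y) * Dd (ex 1) S (τ, y) + Uc u 2 (τ, y) * Dd (ex 2) S (τ, y)) = 0 := H
    linarith
  have HentF : Dd et S = fun w =>
      -(Uc u 0 w * Dd (ex 0) S w + Uc u 1 w * Dd (ex 1) S w + Uc u 2 w * Dd (ex 2) S w) :=
    funext Hent
  -- Euler equation, componentwise in canonical form
  have Heul : ∀ (k : Fin 3) (w : M3), Dd et (Uc u k) w
      = Dd (ex k) g w + h w * Dd (ex k) S w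
        - (Uc u 0 w * Dd (ex 0) (Uc u k) w + Uc u 1 w * Dd (ex 1) (Uc u k) w
          + Uc u 2 w * Dd (ex 2) (Uc u k) w) := by
    rintro k ⟨τ, y⟩
    have H := euler τ y
    have Hk := congrArg (fun vv : E3 => vv k) H
    simp only [PiLp.add_apply, PiLp.smul_apply, smul_eq_mul] at Hk
    rw [deriv_slice u (du (τ, y)), fderiv_slice u (du (τ, y)) (u (τ, y))] at Hk
    rw [← fderiv_pi_comp u (du (τ, y)) ((1 : ℝ), (0 : E3)) k,
      ← fderiv_pi_comp u (du (τ, y)) ((0 : ℝ), u (τ, y)) k] at Hk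
    rw [fderiv_dir_decomp (fun z => u z k) (τ, y) (u (τ, y)), Fin.sum_univ_three] at Hk
    rw [grad_comp (fun y' => g (τ, y')) y k, grad_comp (fun y' => S (τ, y')) y k] at Hk
    rw [fderiv_slice g (dg (τ, y)), fderiv_slice S (dS (τ, y))] at Hk
    have H2 : Dd et (Uc u k) (τ, y) + (Uc u 0 (τ, y) * Dd (ex 0) (Uc u k) (τ, y)
        + Uc u 1 (τ, y) * Dd (ex 1) (Uc u k) (τ, y)
        + Uc u 2 (τ, y) * Dd (ex 2) (Uc u k) (τ, y))
        = Dd (ex k) g (τ, y) + h (τ, y) * Dd (ex k) S (τ, y) := Hk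
    linarith
  have HeulF : ∀ k : Fin 3, Dd et (Uc u k) = fun w =>
      Dd (ex k) g w + h w * Dd (ex k) S w
        - (Uc u 0 w * Dd (ex 0) (Uc u k) w + Uc u 1 w * Dd (ex 1) (Uc u k) w
          + Uc u 2 w * Dd (ex 2) (Uc u k) w) :=
    fun k => funext (Heul k)
  -- continuity equation at the point, canonical form
  have Hsm : ∀ i : Fin 3,
      fderiv ℝ (fun y => ρ (t, y) • u (t, y)) x (EuclideanSpace.single i 1) i
        = Dd (ex i) ρ (t, x) * Uc u i (t, x) + ρ (t, x) * Dd (ex i) (Uc u i) (t, x) := by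
    intro i
    have hyd : DifferentiableAt ℝ (fun y : E3 => ((t, y) : M3)) x :=
      (hasFDerivAt_prodMk_right t x).differentiableAt
    have hρsl : DifferentiableAt ℝ (fun y : E3 => ρ (t, y)) x := (dρ (t, x)).comp x hyd
    have husl : DifferentiableAt ℝ (fun y : E3 => u (t, y) i) x := (dUc i (t, x)).comp x hyd
    have hsmsl : DifferentiableAt ℝ (fun y : E3 => ρ (t, y) • u (t, y)) x :=
      hρsl.smul ((du (t, x)).comp x hyd)
    calc fderiv ℝ (fun y => ρ (t, y) • u (t, y)) x (EuclideanSpace.single i 1) i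
        = fderiv ℝ (fun y => (ρ (t, y) • u (t, y)) i) x (EuclideanSpace.single i 1) :=
          (fderiv_pi_comp _ hsmsl _ i).symm
      _ = fderiv ℝ (fun y => ρ (t, y) * u (t, y) i) x (EuclideanSpace.single i 1) := rfl
      _ = ρ (t, x) * Dd (ex i) (Uc u i) (t, x) + Uc u i (t, x) * Dd (ex i) ρ (t, x) := by
          rw [fderiv_fun_mul hρsl husl]
          simp only [ContinuousLinearMap.add_apply, ContinuousLinearMap.smul_apply, smul_eq_mul]
          rw [show (fun y : E3 => u (t, y) i) = (fun y : E3 => Uc u i (t, y)) from rfl,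
            fderiv_slice (Uc u i) (dUc i (t, x)), fderiv_slice ρ (dρ (t, x))]
          rfl
      _ = Dd (ex i) ρ (t, x) * Uc u i (t, x) + ρ (t, x) * Dd (ex i) (Uc u i) (t, x) := by ring
  have Hρt : Dd et ρ (t, x)
      = -((Dd (ex 0) ρ (t, x) * Uc u 0 (t, x) + ρ (t, x) * Dd (ex 0) (Uc u 0) (t, x))
        + (Dd (ex 1) ρ (t, x) * Uc u 1 (t, x) + ρ (t, x) * Dd (ex 1) (Uc u 1) (t, x))
        + (Dd (ex 2) ρ (t, x) * Uc u 2 (t, x) + ρ (t, x) * Dd (ex 2) (Uc u 2) (t, x))) := by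
    have H := continuity t x
    rw [Fin.sum_univ_three, Hsm 0, Hsm 1, Hsm 2, deriv_slice ρ (dρ (t, x))] at H
    have H2 : Dd et ρ (t, x)
        + ((Dd (ex 0) ρ (t, x) * Uc u 0 (t, x) + ρ (t, x) * Dd (ex 0) (Uc u 0) (t, x))
        + (Dd (ex 1) ρ (t, x) * Uc u 1 (t, x) + ρ (t, x) * Dd (ex 1) (Uc u 1) (t, x))
        + (Dd (ex 2) ρ (t, x) * Uc u 2 (t, x) + ρ (t, x) * Dd (ex 2) (Uc u 2) (t, x))) = 0 := by
      rw [show Dd et ρ (t, x) = fderiv ℝ ρ (t, x) (1, 0) from rfl]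
      linarith
    linarith
  -- expansion of the derivative of the vorticity scalar
  have hAid : ∀ v : M3, Dd v (Af u S) (t, x)
      = Dd v (Dd (ex 0) S) (t, x)
          * (Dd (ex 1) (Uc u 2) (t, x) - Dd (ex 2) (Uc u 1) (t, x))
        + Dd (ex 0) S (t, x)
          * (Dd v (Dd (ex 1) (Uc u 2)) (t, x) - Dd v (Dd (ex 2) (Uc u 1)) (t, x))
        + (Dd v (Dd (ex 1) S) (t, x)
          * (Dd (ex 2) (Uc u 0) (t, x) - Dd (ex 0) (Uc u 2) (t, x))
        + Dd (ex 1) S (t, x)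
          * (Dd v (Dd (ex 2) (Uc u 0)) (t, x) - Dd v (Dd (ex 0) (Uc u 2)) (t, x)))
        + (Dd v (Dd (ex 2) S) (t, x)
          * (Dd (ex 0) (Uc u 1) (t, x) - Dd (ex 1) (Uc u 0) (t, x))
        + Dd (ex 2) S (t, x)
          * (Dd v (Dd (ex 0) (Uc u 1)) (t, x) - Dd v (Dd (ex 1) (Uc u 0)) (t, x))) := by
    intro v
    rw [show Af u S = (fun z =>
      Dd (ex 0) S z * (Dd (ex 1) (Uc u 2) z - Dd (ex 2) (Uc u 1) z)
      + Dd (ex 1) S z * (Dd (ex 2) (Uc u 0) z - Dd (ex 0) (Uc u 2) z)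
      + Dd (ex 2) S z * (Dd (ex 0) (Uc u 1) z - Dd (ex 1) (Uc u 0) z)) from rfl]
    exact Dd_cyc _ _ _ _ _ _ _ _ _
      (Dd_diff hS _ _) (Dd_diff hS _ _) (Dd_diff hS _ _)
      (Dd_diff (hUc 2) _ _) (Dd_diff (hUc 1) _ _) (Dd_diff (hUc 0) _ _)
      (Dd_diff (hUc 2) _ _) (Dd_diff (hUc 1) _ _) (Dd_diff (hUc 0) _ _) v
  have hdiv : ∀ v : M3, Dd v Θ (t, x)
      = (Dd v (Af u S) (t, x) * ρ (t, x) - Af u S (t, x) * Dd v ρ (t, x)) / ρ (t, x) ^ 2 := by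
    intro v
    rw [hΘdef]
    exact Dd_div (dAf (t, x)) (dρ (t, x)) hρ0 v
  have hdivt : fderiv ℝ Θ (t, x) (1, 0)
      = (Dd et (Af u S) (t, x) * ρ (t, x) - Af u S (t, x) * Dd et ρ (t, x)) / ρ (t, x) ^ 2 :=
    hdiv et
  -- rewrite the goal
  have hg1 : (fun τ => ertelPV u ρ S τ x) = fun τ => Θ (τ, x) :=
    funext fun τ => by rw [ertelPV_eq hu hS, hΘdef]
  have hg2 : (fun y => ertelPV u ρ S t y) = fun y => Θ (t, y) :=
    funext fun y => by rw [ertelPV_eq hu hS, hΘdef]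
  rw [hg1, hg2, deriv_slice Θ (dΘ (t, x)), real_inner_comm, inner_grad,
    fderiv_slice Θ (dΘ (t, x)) (u (t, x)), fderiv_dir_decomp Θ (t, x) (u (t, x)),
    Fin.sum_univ_three]
  rw [hdivt, show u (t, x) 0 = Uc u 0 (t, x) from rfl, show u (t, x) 1 = Uc u 1 (t, x) from rfl,
    show u (t, x) 2 = Uc u 2 (t, x) from rfl, hdiv (ex 0), hdiv (ex 1), hdiv (ex 2)]
  rw [hAid et, hAid (ex 0), hAid (ex 1), hAid (ex 2)]
  rw [Dd_comm hS (ex 0) et (t, x), Dd_comm hS (ex 1) et (t, x), Dd_comm hS (ex 2) et (t, x)]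
  rw [Dd_comm (hUc 2) (ex 1) et (t, x), Dd_comm (hUc 1) (ex 2) et (t, x),
    Dd_comm (hUc 0) (ex 2) et (t, x), Dd_comm (hUc 2) (ex 0) et (t, x),
    Dd_comm (hUc 1) (ex 0) et (t, x), Dd_comm (hUc 0) (ex 1) et (t, x)]
  rw [HentF, HeulF 0, HeulF 1, HeulF 2]
  rw [Dd_negsum3 (z := (t, x)) (Uc u 0) (Uc u 1) (Uc u 2)
      (Dd (ex 0) S) (Dd (ex 1) S) (Dd (ex 2) S)
      (dUc 0 _) (dUc 1 _) (dUc 2 _) (Dd_diff hS _ _) (Dd_diff hS _ _) (Dd_diff hS _ _) (ex 0),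
    Dd_negsum3 (z := (t, x)) (Uc u 0) (Uc u 1) (Uc u 2)
      (Dd (ex 0) S) (Dd (ex 1) S) (Dd (ex 2) S)
      (dUc 0 _) (dUc 1 _) (dUc 2 _) (Dd_diff hS _ _) (Dd_diff hS _ _) (Dd_diff hS _ _) (ex 1),
    Dd_negsum3 (z := (t, x)) (Uc u 0) (Uc u 1) (Uc u 2)
      (Dd (ex 0) S) (Dd (ex 1) S) (Dd (ex 2) S)
      (dUc 0 _) (dUc 1 _) (dUc 2 _) (Dd_diff hS _ _) (Dd_diff hS _ _) (Dd_diff hS _ _) (ex 2)]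
  rw [Dd_eulshape (z := (t, x)) (Dd (ex 2) g) h (Dd (ex 2) S)
      (Uc u 0) (Dd (ex 0) (Uc u 2)) (Uc u 1) (Dd (ex 1) (Uc u 2)) (Uc u 2) (Dd (ex 2) (Uc u 2))
      (Dd_diff hg _ _) (dh _) (Dd_diff hS _ _)
      (dUc 0 _) (Dd_diff (hUc 2) _ _) (dUc 1 _) (Dd_diff (hUc 2) _ _)
      (dUc 2 _) (Dd_diff (hUc 2) _ _) (ex 1),
    Dd_eulshape (z := (t, x)) (Dd (ex 1) g) h (Dd (ex 1) S)
      (Uc u 0) (Dd (ex 0) (Uc u 1)) (Uc u 1) (Dd (ex 1) (Uc u 1)) (Uc u 2) (Dd (ex 2) (Uc u 1))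
      (Dd_diff hg _ _) (dh _) (Dd_diff hS _ _)
      (dUc 0 _) (Dd_diff (hUc 1) _ _) (dUc 1 _) (Dd_diff (hUc 1) _ _)
      (dUc 2 _) (Dd_diff (hUc 1) _ _) (ex 2),
    Dd_eulshape (z := (t, x)) (Dd (ex 0) g) h (Dd (ex 0) S)
      (Uc u 0) (Dd (ex 0) (Uc u 0)) (Uc u 1) (Dd (ex 1) (Uc u 0)) (Uc u 2) (Dd (ex 2) (Uc u 0))
      (Dd_diff hg _ _) (dh _) (Dd_diff hS _ _)
      (dUc 0 _) (Dd_diff (hUc 0) _ _) (dUc 1 _) (Dd_diff (hUc 0) _ _)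
      (dUc 2 _) (Dd_diff (hUc 0) _ _) (ex 2),
    Dd_eulshape (z := (t, x)) (Dd (ex 2) g) h (Dd (ex 2) S)
      (Uc u 0) (Dd (ex 0) (Uc u 2)) (Uc u 1) (Dd (ex 1) (Uc u 2)) (Uc u 2) (Dd (ex 2) (Uc u 2))
      (Dd_diff hg _ _) (dh _) (Dd_diff hS _ _)
      (dUc 0 _) (Dd_diff (hUc 2) _ _) (dUc 1 _) (Dd_diff (hUc 2) _ _)
      (dUc 2 _) (Dd_diff (hUc 2) _ _) (ex 0),
    Dd_eulshape (z := (t, x)) (Dd (ex 1) g) h (Dd (ex 1) S)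
      (Uc u 0) (Dd (ex 0) (Uc u 1)) (Uc u 1) (Dd (ex 1) (Uc u 1)) (Uc u 2) (Dd (ex 2) (Uc u 1))
      (Dd_diff hg _ _) (dh _) (Dd_diff hS _ _)
      (dUc 0 _) (Dd_diff (hUc 1) _ _) (dUc 1 _) (Dd_diff (hUc 1) _ _)
      (dUc 2 _) (Dd_diff (hUc 1) _ _) (ex 0),
    Dd_eulshape (z := (t, x)) (Dd (ex 0) g) h (Dd (ex 0) S)
      (Uc u 0) (Dd (ex 0) (Uc u 0)) (Uc u 1) (Dd (ex 1) (Uc u 0)) (Uc u 2) (Dd (ex 2) (Uc u 0))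
      (Dd_diff hg _ _) (dh _) (Dd_diff hS _ _)
      (dUc 0 _) (Dd_diff (hUc 0) _ _) (dUc 1 _) (Dd_diff (hUc 0) _ _)
      (dUc 2 _) (Dd_diff (hUc 0) _ _) (ex 1)]
  simp only [Dd_comm hS (ex 0) (ex 1) (t, x), Dd_comm hS (ex 0) (ex 2) (t, x),
    Dd_comm hS (ex 1) (ex 2) (t, x),
    Dd_comm hg (ex 0) (ex 1) (t, x), Dd_comm hg (ex 0) (ex 2) (t, x),
    Dd_comm hg (ex 1) (ex 2) (t, x),
    Dd_comm (hUc 0) (ex 0) (ex 1) (t, x), Dd_comm (hUc 0) (ex 0) (ex 2) (t, x),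
    Dd_comm (hUc 0) (ex 1) (ex 2) (t, x),
    Dd_comm (hUc 1) (ex 0) (ex 1) (t, x), Dd_comm (hUc 1) (ex 0) (ex 2) (t, x),
    Dd_comm (hUc 1) (ex 1) (ex 2) (t, x),
    Dd_comm (hUc 2) (ex 0) (ex 1) (t, x), Dd_comm (hUc 2) (ex 0) (ex 2) (t, x),
    Dd_comm (hUc 2) (ex 1) (ex 2) (t, x)]
  rw [Hρt]
  rw [show Af u S (t, x) =
      Dd (ex 0) S (t, x) * (Dd (ex 1) (Uc u 2) (t, x) - Dd (ex 2) (Uc u 1) (t, x))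
      + Dd (ex 1) S (t, x) * (Dd (ex 2) (Uc u 0) (t, x) - Dd (ex 0) (Uc u 2) (t, x))
      + Dd (ex 2) S (t, x) * (Dd (ex 0) (Uc u 1) (t, x) - Dd (ex 1) (Uc u 0) (t, x)) from rfl]
  field_simp
  ring_nf
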